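/- arXiv:1609.08273 — 8 statements merged into one kernel-verified Lean document; each statement's English description precedes it below -/
import Mathlib

section
/- For every v = (a,b,c,d) in W one has R(v)·R(v) = q(v)·1, where 1 denotes the identity element of M₂(A) (i.e. the 6×6 identity matrix). -/
open Matrix

noncomputable section

variable {F : Type*} [Field F]

/-- The linearization `x × y := (x+y)^# - x^# - y^#` of the adjugate. -/
def xmul (x y : Matrix (Fin 3) (Fin 3) F) : Matrix (Fin 3) (Fin 3) F :=
  (x + y).adjugate - x.adjugate - y.adjugate

/-- The trace pairing `(x, y) := tr (x y)`. -/
def tp (x y : Matrix (Fin 3) (Fin 3) F) : F := (x * y).trace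

/-- The space `W = F ⊕ A ⊕ A ⊕ F` with `A = M₃(F)`. -/
abbrev Wsp (F : Type*) : Type _ :=
  F × Matrix (Fin 3) (Fin 3) F × Matrix (Fin 3) (Fin 3) F × F

/-- Freudenthal's quartic form on `W`. -/
def qf (v : Wsp F) : F :=
  match v with
  | (a, b, c, d) =>
      (a * d - tp b c) ^ 2 + 4 * a * c.det + 4 * d * b.det
        - 4 * tp b.adjugate c.adjugate

/-- The symplectic form on `W`. -/
def symp (v v' : Wsp F) : F :=
  match v, v' with
  | (a, b, c, d), (a', b', c', d') => a * d' - tp b c' + tp c b' - d * a'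

/-- The map `v ↦ v^♭`. -/
def flat (v : Wsp F) : Wsp F :=
  match v with
  | (a, b, c, d) =>
      (-(a ^ 2 * d) + a * tp b c - 2 * b.det,
       (-(2 : F)) • xmul c b.adjugate + (2 * a) • c.adjugate - (a * d - tp b c) • b,
       (2 : F) • xmul b c.adjugate - (2 * d) • b.adjugate + (a * d - tp b c) • c,
       a * d ^ 2 - d * tp b c + 2 * c.det)

/-- The symmetric trilinear map `t` on `W`, normalized by `t(v,v,v) = v^♭`. -/
def tW (x y z : Wsp F) : Wsp F :=
  (6 : F)⁻¹ •
    (flat (x + y + z) - flat (x + y) - flat (x + z) - flat (y + z)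
      + flat x + flat y + flat z)

/-- The element `R(v)` of `M₂(A)`. -/
def Rv (v : Wsp F) : Matrix (Fin 2) (Fin 2) (Matrix (Fin 3) (Fin 3) F) :=
  match v with
  | (a, b, c, d) =>
      !![(a * d - tp c b) • (1 : Matrix (Fin 3) (Fin 3) F) + (2 : F) • (c * b),
          (2 : F) • b.adjugate - (2 * a) • c;
         (2 * d) • b - (2 : F) • c.adjugate,
          (-(a * d) + tp b c) • (1 : Matrix (Fin 3) (Fin 3) F) - (2 : F) • (b * c)]

/-- The element `ℓ^!` of `W` attached to a row vector `ℓ = (s, t) ∈ A²`. -/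
def rowShriek (s t : Matrix (Fin 3) (Fin 3) F) : Wsp F :=
  (s.det, s.adjugate * t, t.adjugate * s, t.det)

/-- The element `η^!` of `W` attached to a column vector `η = (u, w) ∈ A²`. -/
def colShriek (u w : Matrix (Fin 3) (Fin 3) F) : Wsp F :=
  (u.det, w * u.adjugate, u * w.adjugate, w.det)

set_option maxHeartbeats 4000000 in
/-- `R(v) · R(v) = q(v) · 1` in `M₂(A)`. -/
theorem statement0 [CharZero F] (v : Wsp F) :
    Rv v * Rv v = qf v • (1 : Matrix (Fin 2) (Fin 2) (Matrix (Fin 3) (Fin 3) F)) := by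
  obtain ⟨a, b, c, d⟩ := v
  simp only [Rv, qf, tp]
  ext i j
  rw [Matrix.mul_apply, Fin.sum_univ_two]
  fin_cases i <;> fin_cases j <;>
  · rename_i k l
    simp only [Matrix.of_apply, Matrix.cons_val', Matrix.cons_val_zero, Matrix.cons_val_one,
      Matrix.head_cons, Matrix.empty_val', Matrix.cons_val_fin_one, Matrix.head_fin_const,
      Fin.zero_eta, Fin.mk_one, Fin.isValue, if_true, if_false, ne_eq, Fin.one_eq_zero_iff,
      Fin.zero_eq_one_iff, OfNat.ofNat_ne_one, OfNat.one_ne_ofNat, not_false_eq_true,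
      ite_true, ite_false, reduceIte,
      Matrix.add_apply, Matrix.sub_apply, Matrix.mul_apply, Matrix.smul_apply,
      Matrix.one_apply, Matrix.zero_apply, Matrix.trace_fin_three, Matrix.det_fin_three,
      Matrix.adjugate_fin_three, Fin.sum_univ_three, smul_eq_mul, mul_zero, smul_zero]
    fin_cases k <;> fin_cases l <;> simp <;> ring
end
end

section
/- For every row vector ℓ = (s,t) ∈ A² and every column vector η = (u,w) ∈ A², one has ⟨ℓ^!, η^!⟩ = det(s·w − t·u); explicitly, det(s)·det(w) − tr(s^#·t·u·w^#) + tr(t^#·s·w·u^#) − det(t)·det(u) = det(s·w − t·u). Moreover R(ℓ^!) = 0 and R(η^!) = 0. -/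
open Matrix

noncomputable section

variable {F : Type*} [Field F]

section Aux
variable {F : Type*} [Field F]

lemma adj_adj3 (x : Matrix (Fin 3) (Fin 3) F) : x.adjugate.adjugate = x.det • x := by
  rw [Matrix.adjugate_adjugate x (by simp : Fintype.card (Fin 3) ≠ 1)]; norm_num

lemma sandA3 (x y : Matrix (Fin 3) (Fin 3) F) :
    x.adjugate * y * (y.adjugate * x) = (x.det * y.det) • (1 : Matrix (Fin 3) (Fin 3) F) := by
  rw [Matrix.mul_assoc, ← Matrix.mul_assoc y y.adjugate x, Matrix.mul_adjugate,
    Matrix.smul_mul, Matrix.one_mul, Matrix.mul_smul, Matrix.adjugate_mul, smul_smul, mul_comm]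

lemma sandB3 (x y : Matrix (Fin 3) (Fin 3) F) :
    x * y.adjugate * (y * x.adjugate) = (x.det * y.det) • (1 : Matrix (Fin 3) (Fin 3) F) := by
  rw [Matrix.mul_assoc, ← Matrix.mul_assoc y.adjugate y x.adjugate, Matrix.adjugate_mul,
    Matrix.smul_mul, Matrix.one_mul, Matrix.mul_smul, Matrix.mul_adjugate, smul_smul, mul_comm]

lemma trA3 (x y : Matrix (Fin 3) (Fin 3) F) :
    (x.adjugate * y * (y.adjugate * x)).trace = 3 * (x.det * y.det) := by
  rw [sandA3, Matrix.trace_smul, Matrix.trace_one]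
  simp [Fintype.card_fin, smul_eq_mul]; ring

lemma trB3 (x y : Matrix (Fin 3) (Fin 3) F) :
    (x * y.adjugate * (y * x.adjugate)).trace = 3 * (x.det * y.det) := by
  rw [sandB3, Matrix.trace_smul, Matrix.trace_one]
  simp [Fintype.card_fin, smul_eq_mul]; ring

lemma adjprodA3 (x y : Matrix (Fin 3) (Fin 3) F) :
    (x.adjugate * y).adjugate = x.det • (y.adjugate * x) := by
  rw [Matrix.adjugate_mul_distrib, adj_adj3, Matrix.mul_smul]

lemma adjprodB3 (x y : Matrix (Fin 3) (Fin 3) F) :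
    (x * y.adjugate).adjugate = y.det • (y * x.adjugate) := by
  rw [Matrix.adjugate_mul_distrib, adj_adj3, Matrix.smul_mul]

lemma matzero3 : (!![(0 : Matrix (Fin 3) (Fin 3) F), 0; 0, 0]) = 0 := by
  ext i j : 2; fin_cases i <;> fin_cases j <;> rfl

set_option maxHeartbeats 1000000 in
lemma detsub3 (X Y : Matrix (Fin 3) (Fin 3) F) :
    (X - Y).det = X.det - (X.adjugate * Y).trace + (X * Y.adjugate).trace - Y.det := by
  simp only [Matrix.det_fin_three, Matrix.adjugate_fin_three, Matrix.trace_fin_three,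
    Matrix.mul_apply, Fin.sum_univ_three, Matrix.sub_apply, Matrix.cons_val', Matrix.cons_val_zero,
    Matrix.cons_val_one, Matrix.head_cons, Matrix.empty_val', Matrix.cons_val_fin_one,
    Matrix.head_fin_const, Matrix.cons_val_two, Matrix.tail_cons, Matrix.of_apply]
  ring

lemma mainid3 (s t u w : Matrix (Fin 3) (Fin 3) F) :
    s.det * w.det - (s.adjugate * t * u * w.adjugate).trace
        + (t.adjugate * s * w * u.adjugate).trace - t.det * u.det
      = (s * w - t * u).det := by
  rw [detsub3, Matrix.det_mul, Matrix.det_mul, Matrix.adjugate_mul_distrib,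
    Matrix.adjugate_mul_distrib]
  have h1 : (w.adjugate * s.adjugate * (t * u)).trace
      = (s.adjugate * t * u * w.adjugate).trace := by
    rw [Matrix.mul_assoc, Matrix.trace_mul_comm]
    congr 1
    simp only [Matrix.mul_assoc]
  have h2 : (s * w * (u.adjugate * t.adjugate)).trace
      = (t.adjugate * s * w * u.adjugate).trace := by
    rw [show s * w * (u.adjugate * t.adjugate) = s * w * u.adjugate * t.adjugate by
      simp only [Matrix.mul_assoc], Matrix.trace_mul_comm]
    simp only [Matrix.mul_assoc]
  rw [h1, h2]

end Aux

/-- `⟨ℓ^!, η^!⟩ = det (s·w − t·u)`, explicitly, and `R(ℓ^!) = 0`, `R(η^!) = 0`. -/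
theorem statement1 [CharZero F] (s t u w : Matrix (Fin 3) (Fin 3) F) :
    symp (rowShriek s t) (colShriek u w) = (s * w - t * u).det ∧
    s.det * w.det - (s.adjugate * t * u * w.adjugate).trace
        + (t.adjugate * s * w * u.adjugate).trace - t.det * u.det
      = (s * w - t * u).det ∧
    Rv (rowShriek s t) = 0 ∧
    Rv (colShriek u w) = 0 := by
  refine ⟨?_, mainid3 s t u w, ?_, ?_⟩
  · show s.det * w.det - tp (s.adjugate * t) (u * w.adjugate)
        + tp (t.adjugate * s) (w * u.adjugate) - t.det * u.det = _
    rw [show tp (s.adjugate * t) (u * w.adjugate)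
        = (s.adjugate * t * u * w.adjugate).trace by
      unfold tp; rw [Matrix.mul_assoc (s.adjugate * t)]]
    rw [show tp (t.adjugate * s) (w * u.adjugate)
        = (t.adjugate * s * w * u.adjugate).trace by
      unfold tp; rw [Matrix.mul_assoc (t.adjugate * s)]]
    exact mainid3 s t u w
  · show Rv (s.det, s.adjugate * t, t.adjugate * s, t.det) = 0
    unfold Rv
    dsimp only
    have h1 : (s.det * t.det - tp (t.adjugate * s) (s.adjugate * t)) •
        (1 : Matrix (Fin 3) (Fin 3) F) + (2 : F) • (t.adjugate * s * (s.adjugate * t)) = 0 := by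
      rw [show tp (t.adjugate * s) (s.adjugate * t)
          = (t.adjugate * s * (s.adjugate * t)).trace from rfl, trA3, sandA3]
      module
    have h2 : (2 : F) • (s.adjugate * t).adjugate - (2 * s.det) • (t.adjugate * s) = 0 := by
      rw [adjprodA3]; module
    have h3 : (2 * t.det) • (s.adjugate * t) - (2 : F) • (t.adjugate * s).adjugate = 0 := by
      rw [adjprodA3]; module
    have h4 : (-(s.det * t.det) + tp (s.adjugate * t) (t.adjugate * s)) •
        (1 : Matrix (Fin 3) (Fin 3) F) - (2 : F) • (s.adjugate * t * (t.adjugate * s)) = 0 := by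
      rw [show tp (s.adjugate * t) (t.adjugate * s)
          = (s.adjugate * t * (t.adjugate * s)).trace from rfl, trA3, sandA3]
      module
    rw [h1, h2, h3, h4, matzero3]
  · show Rv (u.det, w * u.adjugate, u * w.adjugate, w.det) = 0
    unfold Rv
    dsimp only
    have h1 : (u.det * w.det - tp (u * w.adjugate) (w * u.adjugate)) •
        (1 : Matrix (Fin 3) (Fin 3) F) + (2 : F) • (u * w.adjugate * (w * u.adjugate)) = 0 := by
      rw [show tp (u * w.adjugate) (w * u.adjugate)
          = (u * w.adjugate * (w * u.adjugate)).trace from rfl, trB3, sandB3]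
      module
    have h2 : (2 : F) • (w * u.adjugate).adjugate - (2 * u.det) • (u * w.adjugate) = 0 := by
      rw [adjprodB3]; module
    have h3 : (2 * w.det) • (w * u.adjugate) - (2 : F) • (u * w.adjugate).adjugate = 0 := by
      rw [adjprodB3]; module
    have h4 : (-(u.det * w.det) + tp (w * u.adjugate) (u * w.adjugate)) •
        (1 : Matrix (Fin 3) (Fin 3) F) - (2 : F) • (w * u.adjugate * (u * w.adjugate)) = 0 := by
      rw [show tp (w * u.adjugate) (u * w.adjugate)
          = (w * u.adjugate * (u * w.adjugate)).trace from rfl, trB3, sandB3]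
      module
    rw [h1, h2, h3, h4, matzero3]
end
end

section
/- For all v ∈ W, X ∈ A, and invertible m, n ∈ A, the following three conjugation identities hold in M₂(A): (1) R(n(X)(v)) = [[1,0],[X,1]]·R(v)·[[1,0],[−X,1]]; (2) R(w(v)) = [[0,1],[−1,0]]·R(v)·[[0,−1],[1,0]]; (3) R(L(m,n)(v)) = [[m,0],[0,n]]·R(v)·[[det(n)·m^#,0],[0,det(m)·n^#]]. -/
open Matrix

noncomputable section

variable {F : Type*} [Field F]

/-- The map `n(X) : W → W`. -/
def nX (X : Matrix (Fin 3) (Fin 3) F) (v : Wsp F) : Wsp F :=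
  match v with
  | (a, b, c, d) =>
      (a, b + a • X, c + xmul b X + a • X.adjugate,
       d + tp c X + tp b X.adjugate + a * X.det)

/-- The map `w : W → W`, `(a,b,c,d) ↦ (d,−c,b,−a)`. -/
def wmap (v : Wsp F) : Wsp F :=
  match v with
  | (a, b, c, d) => (d, -c, b, -a)

/-- The map `L(m,n) : W → W`. -/
def Lmap (m n : Matrix (Fin 3) (Fin 3) F) (v : Wsp F) : Wsp F :=
  match v with
  | (a, b, c, d) => (m.det * a, n * b * m.adjugate, m * c * n.adjugate, n.det * d)

lemma conjL (m n A B C D P S : Matrix (Fin 3) (Fin 3) F) :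
    !![m,0;0,n] * !![A,B;C,D] * !![P,0;0,S] = !![m*A*P, m*B*S; n*C*P, n*D*S] := by
  ext i j
  fin_cases i <;> fin_cases j <;> simp [Matrix.mul_apply, Fin.sum_univ_two]

lemma tp_conj (b c m n : Matrix (Fin 3) (Fin 3) F) :
    ((m*c*n.adjugate) * (n*b*m.adjugate)).trace = m.det*n.det*(c*b).trace := by
  have h : m*c*n.adjugate*(n*b*m.adjugate) = m * (c * (n.adjugate * n) * (b * m.adjugate)) := by
    noncomm_ring
  rw [h, Matrix.adjugate_mul, Matrix.trace_mul_comm]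
  simp [Matrix.mul_smul, Matrix.smul_mul, Matrix.mul_assoc, Matrix.adjugate_mul, mul_smul_comm,
    smul_mul_assoc, Matrix.trace_smul, smul_eq_mul]
  ring

lemma adj_adj3_s2 (A : Matrix (Fin 3) (Fin 3) F) : A.adjugate.adjugate = A.det • A := by
  have := Matrix.adjugate_adjugate A (by simp : Fintype.card (Fin 3) ≠ 1)
  simpa using this

lemma E00 (a d : F) (b c m n : Matrix (Fin 3) (Fin 3) F) :
    (m.det * a * (n.det * d) - ((m*c*n.adjugate) * (n*b*m.adjugate)).trace) • 1
        + (2:F) • (m*c*n.adjugate*(n*b*m.adjugate))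
      = m * ((a*d - (c*b).trace) • 1 + (2:F)•(c*b)) * (n.det • m.adjugate) := by
  have h : m*c*n.adjugate*(n*b*m.adjugate) = m * (c * (n.adjugate * n) * (b * m.adjugate)) := by
    noncomm_ring
  rw [tp_conj, h, Matrix.adjugate_mul]
  simp only [Matrix.mul_smul, Matrix.smul_mul, mul_smul_comm, smul_mul_assoc, Matrix.mul_add,
    Matrix.add_mul, smul_smul, Matrix.mul_assoc, Matrix.mul_one, Matrix.one_mul,
    Matrix.mul_adjugate, smul_eq_mul]
  module

lemma E01 (a : F) (b c m n : Matrix (Fin 3) (Fin 3) F) :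
    (2:F) • (n*b*m.adjugate).adjugate - (2*(m.det*a)) • (m*c*n.adjugate)
      = m * ((2:F)•b.adjugate - (2*a)•c) * (m.det • n.adjugate) := by
  rw [Matrix.adjugate_mul_distrib, Matrix.adjugate_mul_distrib, adj_adj3_s2]
  simp only [Matrix.mul_smul, Matrix.smul_mul, mul_smul_comm, smul_mul_assoc, Matrix.mul_sub,
    Matrix.sub_mul, smul_smul, Matrix.mul_assoc, smul_eq_mul]
  module

lemma E10 (d : F) (b c m n : Matrix (Fin 3) (Fin 3) F) :
    (2*(n.det*d)) • (n*b*m.adjugate) - (2:F) • (m*c*n.adjugate).adjugate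
      = n * ((2*d)•b - (2:F)•c.adjugate) * (n.det • m.adjugate) := by
  rw [Matrix.adjugate_mul_distrib, Matrix.adjugate_mul_distrib, adj_adj3_s2]
  simp only [Matrix.mul_smul, Matrix.smul_mul, mul_smul_comm, smul_mul_assoc, Matrix.mul_sub,
    Matrix.sub_mul, smul_smul, Matrix.mul_assoc, smul_eq_mul]
  module

lemma E11 (a d : F) (b c m n : Matrix (Fin 3) (Fin 3) F) :
    (-(m.det * a * (n.det * d)) + ((n*b*m.adjugate) * (m*c*n.adjugate)).trace) • 1
        - (2:F) • (n*b*m.adjugate*(m*c*n.adjugate))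
      = n * ((-(a*d) + (b*c).trace) • 1 - (2:F)•(b*c)) * (m.det • n.adjugate) := by
  have h : n*b*m.adjugate*(m*c*n.adjugate) = n * (b * (m.adjugate * m) * (c * n.adjugate)) := by
    noncomm_ring
  rw [tp_conj c b n m, h, Matrix.adjugate_mul]
  simp only [Matrix.mul_smul, Matrix.smul_mul, mul_smul_comm, smul_mul_assoc, Matrix.mul_sub,
    Matrix.sub_mul, Matrix.mul_add, Matrix.add_mul, smul_smul, Matrix.mul_assoc, Matrix.mul_one,
    Matrix.one_mul, Matrix.mul_adjugate, smul_eq_mul]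
  module
set_option maxHeartbeats 4000000 in
lemma part1' (v : Wsp F) (X : Matrix (Fin 3) (Fin 3) F) :
    Rv (nX X v) = !![1, 0; X, 1] * Rv v * !![1, 0; -X, 1] := by
  obtain ⟨a, b, c, d⟩ := v
  ext i j k l
  fin_cases i <;> fin_cases j <;>
    simp [Rv, nX, xmul, tp, Matrix.mul_apply, Fin.sum_univ_succ, Matrix.adjugate_fin_three,
      Matrix.det_fin_three, Matrix.trace_fin_three, Matrix.one_apply, Matrix.smul_apply,
      Matrix.add_apply, Matrix.sub_apply, Matrix.neg_apply, smul_eq_mul] <;>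
    fin_cases k <;> fin_cases l <;> simp <;> ring
lemma part2' (v : Wsp F) :
    Rv (wmap v) = !![0, 1; -1, 0] * Rv v * !![0, -1; 1, 0] := by
  obtain ⟨a, b, c, d⟩ := v
  ext i j k l
  fin_cases i <;> fin_cases j <;>
    simp [Rv, wmap, tp, Matrix.mul_apply, Fin.sum_univ_succ, Matrix.adjugate_fin_three,
      Matrix.det_fin_three, Matrix.trace_fin_three, Matrix.one_apply, Matrix.smul_apply,
      Matrix.add_apply, Matrix.sub_apply, Matrix.neg_apply, smul_eq_mul] <;>
    fin_cases k <;> fin_cases l <;> simp <;> ring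
lemma part3' (v : Wsp F) (m n : Matrix (Fin 3) (Fin 3) F) :
    Rv (Lmap m n v)
      = !![m, 0; 0, n] * Rv v * !![n.det • m.adjugate, 0; 0, m.det • n.adjugate] := by
  obtain ⟨a, b, c, d⟩ := v
  simp only [Lmap, Rv, tp]
  rw [conjL, E00, E01, E10, E11]

/-- conjugation identities for `R(v)`. -/
theorem statement2 [CharZero F] (v : Wsp F) (X m n : Matrix (Fin 3) (Fin 3) F)
    (hm : IsUnit m) (hn : IsUnit n) :
    Rv (nX X v) = !![1, 0; X, 1] * Rv v * !![1, 0; -X, 1] ∧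
    Rv (wmap v) = !![0, 1; -1, 0] * Rv v * !![0, -1; 1, 0] ∧
    Rv (Lmap m n v)
      = !![m, 0; 0, n] * Rv v * !![n.det • m.adjugate, 0; 0, m.det • n.adjugate] := by
  exact ⟨part1' v X, part2' v, part3' v m n⟩
end
end

section
/- For v ∈ W one has R(v) = 0 if and only if v has rank at most one, i.e. if and only if for every w ∈ W there exists λ ∈ F with t(v,v,w) = λ·v. -/
/-!
Polarizing the cubic map `v ↦ v^♭` gives `3 t(v,v,w) = R(v)·w - ⟨v,w⟩ v`, where `R(v)·w` is
linear in the blocks `P, Q, S, T` of `R(v)` (`blockAction`). So `R(v) = 0` makes every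
`t(v,v,w)` a multiple of `v`. Conversely, if `v = (a,b,c,d)` has rank at most one then
`R(v)·w ∈ F v` for all `w`. Testing `w = (0,0,0,1)` gives `Q = 0`. If `(c,d) ≠ 0`, testing
`w = (1,0,0,0)` and `w = (0,β,0,0)` gives `S = 0`, `tr P = 0` and `β P = T β` for all `β`, so
`P = T` is central and traceless, hence zero; if `(c,d) = 0`, then `P`, `S`, `T` vanish identically.
-/

open Matrix

noncomputable section

variable {F : Type*} [Field F]

theorem Matrix.eq_zero_of_forall_commute_of_trace_eq_zero {n K : Type*} [Fintype n]
    [DecidableEq n] [Nonempty n] [CommRing K] [NoZeroDivisors K] [CharZero K] {M : Matrix n n K}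
    (hM : ∀ N, Commute N M) (htr : M.trace = 0) : M = 0 := by
  obtain ⟨r, rfl⟩ := mem_range_scalar_iff_commute_single'.mpr fun _ _ => hM _
  simp_all [Fintype.card_ne_zero]

theorem eq_zero_of_smul_prod_eq_zero {K M N : Type*} [Field K] [AddCommGroup M] [Module K M]
    [AddCommGroup N] [Module K N] {μ : K} {x : M} {y : N} (hxy : (x, y) ≠ 0)
    (hx : μ • x = 0) (hy : μ • y = 0) : μ = 0 :=
  (smul_eq_zero.mp (Prod.ext hx hy : μ • (x, y) = 0)).resolve_right hxy

@[simp]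
theorem xmul_zero (x : Matrix (Fin 3) (Fin 3) F) : xmul x 0 = 0 := by
  simp [xmul]

def blockAction (R : Matrix (Fin 2) (Fin 2) (Matrix (Fin 3) (Fin 3) F)) (w : Wsp F) : Wsp F :=
  match w with
  | (a', b', c', d') =>
      (-(a' * (R 0 0).trace) - tp b' (R 0 1),
       -(a' • R 1 0) + b' * R 0 0 - (R 0 0).trace • b' - R 1 1 * b' - xmul c' (R 0 1),
       -xmul b' (R 1 0) + (R 0 0).trace • c' - R 0 0 * c' + c' * R 1 1 - d' • R 0 1,
       -tp c' (R 1 0) + (R 0 0).trace * d')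

@[simp]
theorem blockAction_zero (w : Wsp F) : blockAction 0 w = 0 := by
  simp [blockAction, xmul, tp]

theorem blockAction_one_zero_zero_zero (R : Matrix (Fin 2) (Fin 2) (Matrix (Fin 3) (Fin 3) F)) :
    blockAction R (1, 0, 0, 0) = (-(R 0 0).trace, -R 1 0, 0, 0) := by
  simp [blockAction, xmul, tp]

theorem blockAction_zero_zero_zero_one (R : Matrix (Fin 2) (Fin 2) (Matrix (Fin 3) (Fin 3) F)) :
    blockAction R (0, 0, 0, 1) = (0, 0, -R 0 1, (R 0 0).trace) := by
  simp [blockAction, xmul, tp]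

theorem blockAction_zero_mat_zero_zero (R : Matrix (Fin 2) (Fin 2) (Matrix (Fin 3) (Fin 3) F))
    (β : Matrix (Fin 3) (Fin 3) F) :
    blockAction R (0, β, 0, 0) =
      (-tp β (R 0 1), β * R 0 0 - (R 0 0).trace • β - R 1 1 * β, -xmul β (R 1 0), 0) := by
  simp [blockAction, xmul, tp]

set_option maxHeartbeats 10000000 in
set_option maxRecDepth 10000 in
theorem three_smul_tW_self_self [CharZero F] (v w : Wsp F) :
    (3 : F) • tW v v w = blockAction (Rv v) w - symp v w • v := by
  obtain ⟨a, b, c, d⟩ := v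
  obtain ⟨a', b', c', d'⟩ := w
  simp only [tW, flat, symp, tp, xmul, blockAction, Rv, Prod.smul_mk, Prod.mk_add_mk,
    Prod.mk_sub_mk, smul_eq_mul, Prod.mk.injEq]
  refine ⟨?_, Matrix.ext fun i j => ?_, Matrix.ext fun i j => ?_, ?_⟩ <;>
    (try fin_cases i <;> fin_cases j) <;>
    simp only [Matrix.det_fin_three, Matrix.adjugate_fin_three, Matrix.trace_fin_three,
      Matrix.mul_apply, Fin.sum_univ_three, Matrix.add_apply, Matrix.sub_apply,
      Matrix.smul_apply, Matrix.neg_apply, Matrix.one_fin_three, Matrix.of_apply,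
      Matrix.cons_val_zero, Matrix.cons_val_one, Matrix.cons_val_two, Matrix.head_cons,
      Matrix.tail_cons, Fin.reduceFinMk, smul_eq_mul] <;>
    ring

theorem tW_self_self_of_Rv_eq_zero [CharZero F] {v : Wsp F} (hR : Rv v = 0) (w : Wsp F) :
    tW v v w = (-(symp v w / 3)) • v := by
  have h := three_smul_tW_self_self v w
  rw [hR, blockAction_zero, zero_sub] at h
  rw [← inv_smul_smul₀ (three_ne_zero' F) (tW v v w), h, smul_neg, smul_smul, ← neg_smul]
  ring_nf

theorem Rv_eq_zero_of_forall_blockAction_mem [CharZero F] {v : Wsp F}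
    (h : ∀ w, ∃ μ : F, blockAction (Rv v) w = μ • v) : Rv v = 0 := by
  obtain ⟨a, b, c, d⟩ := v
  have hQ : Rv (a, b, c, d) 0 1 = 0 := by
    by_cases hab : (a, b) = 0
    · obtain ⟨rfl, rfl⟩ := Prod.mk_eq_zero.mp hab
      simp [Rv]
    obtain ⟨μ, hμ⟩ := h (0, 0, 0, 1)
    simp only [blockAction_zero_zero_zero_one, Prod.smul_mk, Prod.mk.injEq] at hμ
    obtain ⟨ha, hb, hc, -⟩ := hμ
    rw [eq_zero_of_smul_prod_eq_zero hab ha.symm hb.symm, zero_smul] at hc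
    exact neg_eq_zero.mp hc
  by_cases hcd : (c, d) = 0
  · obtain ⟨rfl, rfl⟩ := Prod.mk_eq_zero.mp hcd
    refine Matrix.ext fun i j => ?_
    fin_cases i <;> fin_cases j
    all_goals first | exact hQ | simp [Rv, tp]
  obtain ⟨μ, hμ⟩ := h (1, 0, 0, 0)
  simp only [blockAction_one_zero_zero_zero, Prod.smul_mk, Prod.mk.injEq] at hμ
  obtain ⟨htr, hS, hc, hd⟩ := hμ
  rw [eq_zero_of_smul_prod_eq_zero hcd hc.symm hd.symm, zero_smul, neg_eq_zero] at htr hS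
  have hcomm : ∀ β, β * Rv (a, b, c, d) 0 0 = Rv (a, b, c, d) 1 1 * β := by
    intro β
    obtain ⟨ν, hν⟩ := h (0, β, 0, 0)
    simp only [blockAction_zero_mat_zero_zero, htr, hS, hQ, xmul_zero, Prod.smul_mk,
      Prod.mk.injEq] at hν
    obtain ⟨-, hβ, hcβ, hdβ⟩ := hν
    rw [eq_zero_of_smul_prod_eq_zero hcd (by simpa using hcβ.symm) hdβ.symm, zero_smul,
      zero_smul, sub_zero, sub_eq_zero] at hβ
    exact hβ
  have hPT : Rv (a, b, c, d) 0 0 = Rv (a, b, c, d) 1 1 := by simpa using hcomm 1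
  have hP : Rv (a, b, c, d) 0 0 = 0 :=
    Matrix.eq_zero_of_forall_commute_of_trace_eq_zero
      (fun β => by rw [Commute, SemiconjBy, hcomm, hPT]) htr
  refine Matrix.ext fun i j => ?_
  fin_cases i <;> fin_cases j
  exacts [hP, hQ, hS, hPT ▸ hP]

/-- `R(v) = 0` iff `v` has rank at most one. -/
theorem statement3 [CharZero F] (v : Wsp F) :
    Rv v = 0 ↔ ∀ w : Wsp F, ∃ lam : F, tW v v w = lam • v := by
  refine ⟨fun hR w => ⟨_, tW_self_self_of_Rv_eq_zero hR w⟩,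
    fun h => Rv_eq_zero_of_forall_blockAction_mem fun w => ?_⟩
  obtain ⟨lam, hlam⟩ := h w
  refine ⟨3 * lam + symp v w, ?_⟩
  rw [add_smul, mul_smul, ← hlam, three_smul_tW_self_self, sub_add_cancel]

end
end

section
/- For all A, B ∈ M₃(F), setting a := det(A), b := tr(A^#·B), c := tr(A·B^#), d := det(B), one has det(3·(A^# × B^#) − c·A − b·B) = −27a²d² + 18abcd + b²c² − 4ac³ − 4b³d; that is, the determinant of 3·(A^#×B^#) − tr(A·B^#)·A − tr(A^#·B)·B equals the discriminant of the binary cubic form n(Ax+By) = a·x³ + b·x²y + c·xy² + d·y³. -/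
/-!
Both sides are natural under ring homomorphisms, and under `(A, B) ↦ (g A, g B)` both get
multiplied by `(det g)⁴`: the matrix becomes `det g • g * _`, and each coefficient of the cubic
`n(Ax + By)` gets multiplied by `det g`. When `det A` is a unit, taking `g = A⁻¹` reduces the
identity to `A = 1`, where it is a direct computation. A generic matrix has nonzero determinant,
hence a unit one in the fraction field of the polynomial ring it lives over, so the identity holds
for generic `A, B` and then, by specialization, over every commutative ring.
-/

open Matrix

noncomputable section

variable {F : Type*} [Field F]

section

variable {R S : Type*} [CommRing R] [CommRing S]

theorem RingHom.map_trace {n : Type*} [Fintype n] [DecidableEq n] (f : R →+* S)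
    (M : Matrix n n R) : f M.trace = (f.mapMatrix M).trace :=
  AddMonoidHom.map_trace f M

theorem Cubic.discr_map (f : R →+* S) (P : Cubic R) : (P.map f).discr = f P.discr := by
  simp only [Cubic.discr, Cubic.map, map_sub, map_add, map_mul, map_pow, map_ofNat]

theorem Matrix.adjugate_adjugate_fin_three (M : Matrix (Fin 3) (Fin 3) R) :
    M.adjugate.adjugate = M.det • M := by
  simp [adjugate_adjugate]

theorem Matrix.adjugate_one_add_fin_three (X : Matrix (Fin 3) (Fin 3) R) :
    (1 + X).adjugate - 1 - X.adjugate = X.trace • 1 - X := by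
  ext i j
  fin_cases i <;> fin_cases j <;>
    simp [adjugate_fin_three, trace_fin_three] <;> ring

theorem Matrix.trace_mul_adjugate_mul_left (g A B : Matrix (Fin 3) (Fin 3) R) :
    (g * A * (g * B).adjugate).trace = g.det * (A * B.adjugate).trace := by
  rw [adjugate_mul_distrib, Matrix.mul_assoc, trace_mul_comm, Matrix.mul_assoc,
    Matrix.mul_assoc, adjugate_mul]
  simp only [Matrix.mul_smul, Matrix.mul_one, trace_smul, smul_eq_mul]

theorem Matrix.trace_adjugate_mul_mul_left (g A B : Matrix (Fin 3) (Fin 3) R) :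
    ((g * A).adjugate * (g * B)).trace = g.det * (A.adjugate * B).trace := by
  rw [adjugate_mul_distrib, Matrix.mul_assoc, ← Matrix.mul_assoc g.adjugate, adjugate_mul,
    Matrix.smul_mul, Matrix.one_mul, Matrix.mul_smul, trace_smul, smul_eq_mul]

/-- Over a field this is `3 • xmul A.adjugate B.adjugate - (A * B.adjugate).trace • A -
(A.adjugate * B).trace • B`. -/
def discrMatrix (A B : Matrix (Fin 3) (Fin 3) R) : Matrix (Fin 3) (Fin 3) R :=
  (3 : R) • ((A.adjugate + B.adjugate).adjugate - A.adjugate.adjugate - B.adjugate.adjugate)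
    - (A * B.adjugate).trace • A - (A.adjugate * B).trace • B

/-- The coefficients of `n(Ax + By) = det (x A + y B)`. -/
def normCubic (A B : Matrix (Fin 3) (Fin 3) R) : Cubic R :=
  ⟨A.det, (A.adjugate * B).trace, (A * B.adjugate).trace, B.det⟩

theorem discrMatrix_map (f : R →+* S) (A B : Matrix (Fin 3) (Fin 3) R) :
    discrMatrix (f.mapMatrix A) (f.mapMatrix B) = f.mapMatrix (discrMatrix A B) := by
  have map_smul (r : R) (M : Matrix (Fin 3) (Fin 3) R) :
      f.mapMatrix (r • M) = f r • f.mapMatrix M :=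
    Matrix.map_smul' _ _ _ (map_mul f)
  simp only [discrMatrix, map_sub, map_add, map_mul, RingHom.map_adjugate, map_smul,
    f.map_trace, map_ofNat]

theorem normCubic_map (f : R →+* S) (A B : Matrix (Fin 3) (Fin 3) R) :
    normCubic (f.mapMatrix A) (f.mapMatrix B) = (normCubic A B).map f := by
  simp only [normCubic, Cubic.map, map_mul, RingHom.map_adjugate, f.map_trace, RingHom.map_det]

theorem discrMatrix_mul_left (g A B : Matrix (Fin 3) (Fin 3) R) :
    discrMatrix (g * A) (g * B) = g.det • (g * discrMatrix A B) := by
  have adjugate_add : (g * A).adjugate + (g * B).adjugate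
      = (A.adjugate + B.adjugate) * g.adjugate := by
    rw [adjugate_mul_distrib, adjugate_mul_distrib, Matrix.add_mul]
  rw [discrMatrix, discrMatrix, adjugate_add, trace_mul_adjugate_mul_left,
    trace_adjugate_mul_mul_left]
  simp only [adjugate_mul_distrib, adjugate_adjugate_fin_three, Matrix.mul_sub, Matrix.mul_smul,
    Matrix.smul_mul, smul_sub, smul_smul]
  module

theorem det_discrMatrix_mul_left (g A B : Matrix (Fin 3) (Fin 3) R) :
    (discrMatrix (g * A) (g * B)).det = g.det ^ 4 * (discrMatrix A B).det := by
  rw [discrMatrix_mul_left, det_smul, det_mul, Fintype.card_fin]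
  ring

theorem discr_normCubic_mul_left (g A B : Matrix (Fin 3) (Fin 3) R) :
    (normCubic (g * A) (g * B)).discr = g.det ^ 4 * (normCubic A B).discr := by
  simp only [normCubic, Cubic.discr, det_mul, trace_adjugate_mul_mul_left,
    trace_mul_adjugate_mul_left]
  ring

/-- By Cayley–Hamilton this is `-χ'(B)` for the characteristic polynomial `χ` of `B`, whose
determinant is the discriminant of `χ`. -/
theorem discrMatrix_one_left (B : Matrix (Fin 3) (Fin 3) R) :
    discrMatrix 1 B = (2 * B.adjugate.trace) • 1 - (3 : R) • B.adjugate - B.trace • B := by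
  rw [discrMatrix, adjugate_one, adjugate_one, adjugate_one_add_fin_three, Matrix.one_mul,
    Matrix.one_mul]
  module

theorem det_discrMatrix_one_left (B : Matrix (Fin 3) (Fin 3) R) :
    (discrMatrix 1 B).det = (normCubic 1 B).discr := by
  rw [discrMatrix_one_left]
  simp [normCubic, Cubic.discr, det_fin_three, adjugate_fin_three, trace_fin_three]
  ring

theorem det_discrMatrix_of_isUnit_det {A : Matrix (Fin 3) (Fin 3) R} (hA : IsUnit A.det)
    (B : Matrix (Fin 3) (Fin 3) R) : (discrMatrix A B).det = (normCubic A B).discr := by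
  have hinv : A⁻¹ * A = 1 := nonsing_inv_mul A hA
  apply ((isUnit_nonsing_inv_det A hA).pow 4).mul_left_cancel
  rw [← det_discrMatrix_mul_left, ← discr_normCubic_mul_left, hinv, det_discrMatrix_one_left]

theorem det_discrMatrix (A B : Matrix (Fin 3) (Fin 3) R) :
    (discrMatrix A B).det = (normCubic A B).discr := by
  let P := MvPolynomial (Fin 3 × Fin 3) (MvPolynomial (Fin 3 × Fin 3) ℤ)
  let X : Matrix (Fin 3) (Fin 3) P := mvPolynomialX _ _ _
  let Y : Matrix (Fin 3) (Fin 3) P := (mvPolynomialX _ _ ℤ).map MvPolynomial.C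
  have generic : (discrMatrix X Y).det = (normCubic X Y).discr := by
    let φ := algebraMap P (FractionRing P)
    have hφ : Function.Injective φ := IsFractionRing.injective P _
    apply hφ
    rw [RingHom.map_det, ← discrMatrix_map, ← Cubic.discr_map, ← normCubic_map]
    refine det_discrMatrix_of_isUnit_det (Ne.isUnit ?_) _
    rw [← RingHom.map_det, map_ne_zero_iff φ hφ]
    exact det_mvPolynomialX_ne_zero _ _
  let ψ : P →+* R := MvPolynomial.eval₂Hom
    (MvPolynomial.eval₂Hom (Int.castRingHom R) fun p => B p.1 p.2) fun p => A p.1 p.2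
  have hX : ψ.mapMatrix X = A := mvPolynomialX_map_eval₂ _ A
  have hY : ψ.mapMatrix Y = B := by
    ext i j
    simp only [RingHom.mapMatrix_apply, map_apply, Y, ψ, mvPolynomialX_apply]
    exact (MvPolynomial.eval₂Hom_C _ _ _).trans (MvPolynomial.eval₂Hom_X' _ _ _)
  rw [← hX, ← hY, discrMatrix_map, ← RingHom.map_det, generic, normCubic_map, Cubic.discr_map]

end

theorem statement11_general (A B : Matrix (Fin 3) (Fin 3) F) :
    ((3 : F) • xmul A.adjugate B.adjugate
        - (A * B.adjugate).trace • A - (A.adjugate * B).trace • B).det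
      = -27 * A.det ^ 2 * B.det ^ 2
          + 18 * A.det * (A.adjugate * B).trace * (A * B.adjugate).trace * B.det
          + (A.adjugate * B).trace ^ 2 * (A * B.adjugate).trace ^ 2
          - 4 * A.det * (A * B.adjugate).trace ^ 3
          - 4 * (A.adjugate * B).trace ^ 3 * B.det := by
  change (discrMatrix A B).det = _
  rw [det_discrMatrix]
  simp only [normCubic, Cubic.discr]
  ring

/-- the determinant of `3·(A^# × B^#) − tr(A·B^#)·A − tr(A^#·B)·B` equals the
discriminant `−27a²d² + 18abcd + b²c² − 4ac³ − 4b³d` of the binary cubic `n(Ax + By)`. -/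
theorem statement11 [CharZero F] (A B : Matrix (Fin 3) (Fin 3) F) :
    ((3 : F) • xmul A.adjugate B.adjugate
        - (A * B.adjugate).trace • A - (A.adjugate * B).trace • B).det
      = -27 * A.det ^ 2 * B.det ^ 2
          + 18 * A.det * (A.adjugate * B).trace * (A * B.adjugate).trace * B.det
          + (A.adjugate * B).trace ^ 2 * (A * B.adjugate).trace ^ 2
          - 4 * A.det * (A * B.adjugate).trace ^ 3
          - 4 * (A.adjugate * B).trace ^ 3 * B.det :=
  statement11_general A B
end
end

section
/- For all A, B ∈ M₃(F) one has A^# × B^# = tr(A·B^#)·A − A·B^#·A = tr(A^#·B)·B − B·A^#·B; equivalently, B·A^#·B + tr(A·B^#)·A = A·B^#·A + tr(A^#·B)·B, and moreover both sides equal (A × B)^#. -/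
open Matrix

noncomputable section

variable {F : Type*} [Field F]

set_option maxHeartbeats 4000000 in
private theorem aux1 (a b c d e f g h i a' b' c' d' e' f' g' h' i' : F) :
    xmul (adjugate !![a,b,c;d,e,f;g,h,i]) (adjugate !![a',b',c';d',e',f';g',h',i']) =
      (!![a,b,c;d,e,f;g,h,i] * adjugate !![a',b',c';d',e',f';g',h',i']).trace •
        !![a,b,c;d,e,f;g,h,i]
      - !![a,b,c;d,e,f;g,h,i] * adjugate !![a',b',c';d',e',f';g',h',i'] *
        !![a,b,c;d,e,f;g,h,i] := by
  ext x y
  fin_cases x <;> fin_cases y <;>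
    simp [xmul, Matrix.mul_fin_three, Matrix.trace_fin_three_of, Matrix.smul_apply,
      Matrix.add_apply, Matrix.sub_apply, Matrix.adjugate_fin_three_of, smul_eq_mul] <;> ring

set_option maxHeartbeats 4000000 in
private theorem aux2 (a b c d e f g h i a' b' c' d' e' f' g' h' i' : F) :
    xmul (adjugate !![a,b,c;d,e,f;g,h,i]) (adjugate !![a',b',c';d',e',f';g',h',i']) =
      (adjugate !![a,b,c;d,e,f;g,h,i] * !![a',b',c';d',e',f';g',h',i']).trace •
        !![a',b',c';d',e',f';g',h',i']
      - !![a',b',c';d',e',f';g',h',i'] * adjugate !![a,b,c;d,e,f;g,h,i] *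
        !![a',b',c';d',e',f';g',h',i'] := by
  ext x y
  fin_cases x <;> fin_cases y <;>
    simp [xmul, Matrix.mul_fin_three, Matrix.trace_fin_three_of, Matrix.smul_apply,
      Matrix.add_apply, Matrix.sub_apply, Matrix.adjugate_fin_three_of, smul_eq_mul] <;> ring

set_option maxHeartbeats 4000000 in
private theorem aux3 (a b c d e f g h i a' b' c' d' e' f' g' h' i' : F) :
    !![a',b',c';d',e',f';g',h',i'] * adjugate !![a,b,c;d,e,f;g,h,i] *
        !![a',b',c';d',e',f';g',h',i']
      + (!![a,b,c;d,e,f;g,h,i] * adjugate !![a',b',c';d',e',f';g',h',i']).trace •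
        !![a,b,c;d,e,f;g,h,i]
    = (xmul !![a,b,c;d,e,f;g,h,i] !![a',b',c';d',e',f';g',h',i']).adjugate := by
  ext x y
  fin_cases x <;> fin_cases y <;>
    simp [xmul, Matrix.mul_fin_three, Matrix.trace_fin_three_of, Matrix.smul_apply,
      Matrix.add_apply, Matrix.sub_apply, Matrix.adjugate_fin_three_of,
      Matrix.adjugate_fin_three, smul_eq_mul] <;> ring

set_option maxHeartbeats 4000000 in
private theorem aux4 (a b c d e f g h i a' b' c' d' e' f' g' h' i' : F) :
    !![a,b,c;d,e,f;g,h,i] * adjugate !![a',b',c';d',e',f';g',h',i'] *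
        !![a,b,c;d,e,f;g,h,i]
      + (adjugate !![a,b,c;d,e,f;g,h,i] * !![a',b',c';d',e',f';g',h',i']).trace •
        !![a',b',c';d',e',f';g',h',i']
    = (xmul !![a,b,c;d,e,f;g,h,i] !![a',b',c';d',e',f';g',h',i']).adjugate := by
  ext x y
  fin_cases x <;> fin_cases y <;>
    simp [xmul, Matrix.mul_fin_three, Matrix.trace_fin_three_of, Matrix.smul_apply,
      Matrix.add_apply, Matrix.sub_apply, Matrix.adjugate_fin_three_of,
      Matrix.adjugate_fin_three, smul_eq_mul] <;> ring

/-- `A^# × B^# = tr(A·B^#)·A − A·B^#·A = tr(A^#·B)·B − B·A^#·B`, and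
`B·A^#·B + tr(A·B^#)·A = A·B^#·A + tr(A^#·B)·B = (A × B)^#`. -/
theorem statement14 [CharZero F] (A B : Matrix (Fin 3) (Fin 3) F) :
    xmul A.adjugate B.adjugate = (A * B.adjugate).trace • A - A * B.adjugate * A ∧
    xmul A.adjugate B.adjugate = (A.adjugate * B).trace • B - B * A.adjugate * B ∧
    B * A.adjugate * B + (A * B.adjugate).trace • A = (xmul A B).adjugate ∧
    A * B.adjugate * A + (A.adjugate * B).trace • B = (xmul A B).adjugate := by
  have hA : A = !![A 0 0, A 0 1, A 0 2; A 1 0, A 1 1, A 1 2; A 2 0, A 2 1, A 2 2] := by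
    ext i j; fin_cases i <;> fin_cases j <;> rfl
  have hB : B = !![B 0 0, B 0 1, B 0 2; B 1 0, B 1 1, B 1 2; B 2 0, B 2 1, B 2 2] := by
    ext i j; fin_cases i <;> fin_cases j <;> rfl
  rw [hA, hB]
  exact ⟨aux1 _ _ _ _ _ _ _ _ _ _ _ _ _ _ _ _ _ _,
    aux2 _ _ _ _ _ _ _ _ _ _ _ _ _ _ _ _ _ _,
    aux3 _ _ _ _ _ _ _ _ _ _ _ _ _ _ _ _ _ _,
    aux4 _ _ _ _ _ _ _ _ _ _ _ _ _ _ _ _ _ _⟩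
end
end

section
/- For all u, v ∈ M₃(ℂ) one has u·(u*·v − v*·u)^#·u* = conj(det u)·(u·v^#) − (v·u^#) × ((v·u^#)*) + det(u)·((u·v^#)*), where * denotes conjugate transpose. -/
open Matrix

noncomputable section

/-- The linearization `x × y := (x+y)^# - x^# - y^#` of the adjugate, over `ℂ`. -/
def xmulC (x y : Matrix (Fin 3) (Fin 3) ℂ) : Matrix (Fin 3) (Fin 3) ℂ :=
  (x + y).adjugate - x.adjugate - y.adjugate

section Aux

variable {α : Type*} [CommRing α]

/-- The general cross over a commutative ring. -/
def xmulR (x y : Matrix (Fin 3) (Fin 3) α) : Matrix (Fin 3) (Fin 3) α :=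
  (x + y).adjugate - x.adjugate - y.adjugate


lemma adjugate_sub_eq (x y : Matrix (Fin 3) (Fin 3) α) :
    (x - y).adjugate = x.adjugate - xmulR x y + y.adjugate := by
  ext i j
  fin_cases i <;> fin_cases j <;>
  · simp [xmulR, Matrix.adjugate_fin_three]
    ring

lemma xmulR_smul_smul (c d : α) (x y : Matrix (Fin 3) (Fin 3) α) :
    xmulR (c • x) (d • y) = (c * d) • xmulR x y := by
  ext i j
  fin_cases i <;> fin_cases j <;>
  · simp [xmulR, Matrix.adjugate_fin_three]
    ring

lemma xmulR_conj (p q x y : Matrix (Fin 3) (Fin 3) α) :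
    xmulR (p * x * q) (p * y * q) = q.adjugate * xmulR x y * p.adjugate := by
  have h : p * x * q + p * y * q = p * (x + y) * q := by
    rw [Matrix.mul_add, Matrix.add_mul]
  rw [xmulR, xmulR, h, adjugate_mul_distrib, adjugate_mul_distrib,
    adjugate_mul_distrib, adjugate_mul_distrib, adjugate_mul_distrib,
    adjugate_mul_distrib]
  rw [Matrix.mul_sub, Matrix.mul_sub, Matrix.sub_mul, Matrix.sub_mul,
    Matrix.mul_assoc, Matrix.mul_assoc, Matrix.mul_assoc]

lemma key_aux (u v w z : Matrix (Fin 3) (Fin 3) α)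
    (hu : IsLeftRegular u.det) (hw : IsLeftRegular w.det) :
    u * xmulR (w * v) (z * u) * w
      = xmulR (v * u.adjugate) (w.adjugate * z) := by
  have card3 : Fintype.card (Fin 3) ≠ 1 := by simp
  have h := xmulR_conj w.adjugate u.adjugate (w * v) (z * u)
  have e1 : w.adjugate * (w * v) * u.adjugate = w.det • (v * u.adjugate) := by
    rw [← Matrix.mul_assoc, adjugate_mul, Matrix.smul_mul, Matrix.one_mul, Matrix.smul_mul]
  have e2 : w.adjugate * (z * u) * u.adjugate = u.det • (w.adjugate * z) := by
    rw [Matrix.mul_assoc, Matrix.mul_assoc, mul_adjugate, Matrix.mul_smul, Matrix.mul_one,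
      Matrix.mul_smul]
  rw [e1, e2, xmulR_smul_smul, adjugate_adjugate u card3, adjugate_adjugate w card3] at h
  have h2 : (u.det ^ (Fintype.card (Fin 3) - 2) • u) * xmulR (w * v) (z * u) *
      (w.det ^ (Fintype.card (Fin 3) - 2) • w)
        = (u.det * w.det) • (u * xmulR (w * v) (z * u) * w) := by
    simp only [Fintype.card_fin]
    norm_num [Matrix.smul_mul, Matrix.mul_smul, smul_smul, mul_comm]
  rw [h2] at h
  have hreg : IsLeftRegular (u.det * w.det) := hu.mul hw
  refine hreg.matrix ?_
  show (u.det * w.det) • (u * xmulR (w * v) (z * u) * w)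
      = (u.det * w.det) • xmulR (v * u.adjugate) (w.adjugate * z)
  rw [← h, mul_comm w.det u.det]

open Polynomial in
lemma key (u v w z : Matrix (Fin 3) (Fin 3) α) :
    u * xmulR (w * v) (z * u) * w
      = xmulR (v * u.adjugate) (w.adjugate * z) := by
  let g : Matrix (Fin 3) (Fin 3) α → Matrix (Fin 3) (Fin 3) α[X] := fun M =>
    (Polynomial.X : α[X]) • (1 : Matrix (Fin 3) (Fin 3) α[X]) + M.map Polynomial.C
  let f' : Matrix (Fin 3) (Fin 3) α[X] →+* Matrix (Fin 3) (Fin 3) α :=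
    (Polynomial.evalRingHom 0).mapMatrix
  have f'_inv : ∀ M, f' (g M) = M := by
    intro M
    ext i j
    simp [f', g, Matrix.one_apply, apply_ite]
  have f'_mapC : ∀ M : Matrix (Fin 3) (Fin 3) α, f' (M.map Polynomial.C) = M := by
    intro M
    ext i j
    simp [f']
  have f'_adj : ∀ M : Matrix (Fin 3) (Fin 3) α[X],
      f' M.adjugate = (f' M).adjugate := by
    intro M
    exact (Polynomial.evalRingHom 0).map_adjugate M
  have f'_xmul : ∀ M N : Matrix (Fin 3) (Fin 3) α[X],
      f' (xmulR M N) = xmulR (f' M) (f' N) := by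
    intro M N
    simp only [xmulR, map_sub, map_add, f'_adj]
  have hreg : ∀ M : Matrix (Fin 3) (Fin 3) α, IsLeftRegular (g M).det := by
    intro M
    refine (Polynomial.Monic.isRegular ?_).left
    simpa [g, Polynomial.Monic.def] using Polynomial.leadingCoeff_det_X_one_add_C M
  have h := key_aux (g u) (v.map Polynomial.C) (g w) (z.map Polynomial.C)
    (hreg u) (hreg w)
  have := congrArg f' h
  simpa only [_root_.map_mul, f'_xmul, f'_adj, f'_inv, f'_mapC] using this

end Aux

lemma xmulC_eq (x y : Matrix (Fin 3) (Fin 3) ℂ) : xmulC x y = xmulR x y := rfl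

/-- for `u, v ∈ M₃(ℂ)`,
`u·(u*·v − v*·u)^#·u* = conj(det u)·(u·v^#) − (v·u^#) × ((v·u^#)*) + det(u)·((u·v^#)*)`. -/
theorem statement17 (u v : Matrix (Fin 3) (Fin 3) ℂ) :
    u * (uᴴ * v - vᴴ * u).adjugate * uᴴ
      = (starRingEnd ℂ) u.det • (u * v.adjugate)
          - xmulC (v * u.adjugate) (v * u.adjugate)ᴴ
          + u.det • (u * v.adjugate)ᴴ := by
  rw [adjugate_sub_eq]
  rw [Matrix.mul_add, Matrix.mul_sub, Matrix.add_mul, Matrix.sub_mul]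
  have t1 : u * (uᴴ * v).adjugate * uᴴ = (starRingEnd ℂ) u.det • (u * v.adjugate) := by
    rw [adjugate_mul_distrib, ← Matrix.mul_assoc, Matrix.mul_assoc (u * v.adjugate),
      adjugate_mul, det_conjTranspose, Matrix.mul_smul, Matrix.mul_one, starRingEnd_apply]
  have t3 : u * (vᴴ * u).adjugate * uᴴ = u.det • (u * v.adjugate)ᴴ := by
    rw [adjugate_mul_distrib, ← Matrix.mul_assoc, mul_adjugate, Matrix.smul_mul,
      Matrix.one_mul, Matrix.smul_mul, Matrix.conjTranspose_mul, adjugate_conjTranspose]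
  have t2 : u * xmulR (uᴴ * v) (vᴴ * u) * uᴴ
      = xmulC (v * u.adjugate) (v * u.adjugate)ᴴ := by
    rw [xmulC_eq, key u v uᴴ vᴴ, Matrix.conjTranspose_mul, adjugate_conjTranspose]
  rw [t1, t3, t2]

end
end

section
/- Let X ∈ M₃(F) be a symmetric matrix with det(X) = 0 and adjugate X^# ≠ 0 (i.e. X has rank exactly two). Then: (1) there exist γ ∈ F^× and a nonzero row vector v ∈ F³ with X^# = −γ·vᵀ·v (where vᵀ·v denotes the 3×3 outer product); (2) for any γ ∈ F^× and v ∈ F³ with X^# = −γ·vᵀ·v, one has v·X = 0; and (3) γ is unique up to squares: if X^# = −γ₁·v₁ᵀ·v₁ = −γ₂·v₂ᵀ·v₂ with γ₁, γ₂ ∈ F^× and v₁, v₂ nonzero, then γ₁/γ₂ is a square in F^×. -/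
open Matrix

noncomputable section

set_option maxHeartbeats 1600000

/-- for a symmetric `X ∈ M₃(F)` of rank exactly two (`det X = 0`, `X^# ≠ 0`):
(1) there exist `γ ∈ F^×` and a nonzero row vector `v` with `X^# = −γ·vᵀv`;
(2) for any such `γ, v` one has `v·X = 0`;
(3) `γ` is unique up to squares. -/
theorem statement18 {F : Type*} [Field F] [CharZero F] (X : Matrix (Fin 3) (Fin 3) F)
    (hsymm : X.IsSymm) (hdet : X.det = 0) (hadj : X.adjugate ≠ 0) :
    (∃ (γ : F) (v : Fin 3 → F), γ ≠ 0 ∧ v ≠ 0 ∧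
        X.adjugate = (-γ) • vecMulVec v v) ∧
    (∀ (γ : F) (v : Fin 3 → F), γ ≠ 0 →
        X.adjugate = (-γ) • vecMulVec v v → v ᵥ* X = 0) ∧
    (∀ (γ₁ γ₂ : F) (v₁ v₂ : Fin 3 → F), γ₁ ≠ 0 → γ₂ ≠ 0 → v₁ ≠ 0 → v₂ ≠ 0 →
        X.adjugate = (-γ₁) • vecMulVec v₁ v₁ →
        X.adjugate = (-γ₂) • vecMulVec v₂ v₂ →
        ∃ s : F, s ≠ 0 ∧ γ₁ = s ^ 2 * γ₂) := by
  set A := X.adjugate with hA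
  have hAT : Aᵀ = A := by rw [hA, Matrix.adjugate_transpose, hsymm.eq]
  have hAsymm : ∀ i j, A i j = A j i := by
    intro i j
    conv_lhs => rw [← hAT]
    rw [Matrix.transpose_apply]
  have hA2 : A.adjugate = 0 := by
    rw [hA, Matrix.adjugate_adjugate X (by simp), hdet]
    simp
  have hz : ∀ i j, A.adjugate i j = 0 := fun i j => congrFun (congrFun hA2 i) j
  have e00 : A 1 1 * A 2 2 - A 1 2 * A 2 1 = 0 := by
    simpa [Matrix.adjugate_fin_three A] using hz 0 0
  have e01 : -(A 0 1 * A 2 2) + A 0 2 * A 2 1 = 0 := by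
    simpa [Matrix.adjugate_fin_three A] using hz 0 1
  have e02 : A 0 1 * A 1 2 - A 0 2 * A 1 1 = 0 := by
    simpa [Matrix.adjugate_fin_three A] using hz 0 2
  have e10 : -(A 1 0 * A 2 2) + A 1 2 * A 2 0 = 0 := by
    simpa [Matrix.adjugate_fin_three A] using hz 1 0
  have e11 : A 0 0 * A 2 2 - A 0 2 * A 2 0 = 0 := by
    simpa [Matrix.adjugate_fin_three A] using hz 1 1
  have e12 : -(A 0 0 * A 1 2) + A 0 2 * A 1 0 = 0 := by
    simpa [Matrix.adjugate_fin_three A] using hz 1 2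
  have e20 : A 1 0 * A 2 1 - A 1 1 * A 2 0 = 0 := by
    simpa [Matrix.adjugate_fin_three A] using hz 2 0
  have e21 : -(A 0 0 * A 2 1) + A 0 1 * A 2 0 = 0 := by
    simpa [Matrix.adjugate_fin_three A] using hz 2 1
  have e22 : A 0 0 * A 1 1 - A 0 1 * A 1 0 = 0 := by
    simpa [Matrix.adjugate_fin_three A] using hz 2 2
  have hcases : ∀ m : Fin 3, m = 0 ∨ m = 1 ∨ m = 2 := by decide
  have hminor : ∀ i j k l : Fin 3, A i j * A k l = A i l * A k j := by
    intro i j k l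
    rcases hcases i with rfl | rfl | rfl <;> rcases hcases j with rfl | rfl | rfl <;>
      rcases hcases k with rfl | rfl | rfl <;> rcases hcases l with rfl | rfl | rfl <;>
      first
        | ring1
        | linear_combination e00
        | linear_combination -e00
        | linear_combination e01
        | linear_combination -e01
        | linear_combination e02
        | linear_combination -e02
        | linear_combination e10
        | linear_combination -e10
        | linear_combination e11
        | linear_combination -e11
        | linear_combination e12
        | linear_combination -e12
        | linear_combination e20
        | linear_combination -e20
        | linear_combination e21
        | linear_combination -e21
        | linear_combination e22
        | linear_combination -e22
  refine ⟨?_, ?_, ?_⟩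
  · -- existence
    have hAne : ∃ i j, A i j ≠ 0 := by
      by_contra h
      push_neg at h
      exact hadj (by ext i j; exact h i j)
    obtain ⟨i, j, hij⟩ := hAne
    have hii : A i i ≠ 0 := by
      intro h0
      apply hij
      have h1 := hminor i i j j
      rw [h0, zero_mul] at h1
      have h2 : A i j * A i j = 0 := by
        rw [← hAsymm j i] at h1 ⊢
        linear_combination -h1
      exact mul_self_eq_zero.mp h2
    refine ⟨-(A i i)⁻¹, fun k => A i k, by simp [hii], fun h => hii (congrFun h i), ?_⟩
    have key : ∀ k l, A i i * A k l = A i k * A i l := by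
      intro k l
      linear_combination hminor i i k l + A i l * hAsymm k i
    ext k l
    simp only [Matrix.smul_apply, vecMulVec_apply, smul_eq_mul, neg_neg]
    field_simp
    first
      | linear_combination key k l
      | linear_combination -(key k l)
  · -- v ᵥ* X = 0
    intro γ v hγ h
    by_cases hv : v = 0
    · subst hv; simp
    obtain ⟨k, hk⟩ := Function.ne_iff.mp hv
    simp only [Pi.zero_apply] at hk
    have hAX : A * X = 0 := by
      rw [hA, Matrix.adjugate_mul, hdet]
      simp
    rw [h] at hAX
    funext j
    have h2 : -γ * (v k * (v ᵥ* X) j) = 0 := by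
      have h3 := congrFun (congrFun hAX k) j
      simp only [Matrix.mul_apply, Matrix.smul_apply, vecMulVec_apply, Matrix.zero_apply,
        smul_eq_mul, Fin.sum_univ_three] at h3
      simp only [Matrix.vecMul, dotProduct, Fin.sum_univ_three]
      linear_combination h3
    simp only [mul_eq_zero, neg_eq_zero, Pi.zero_apply] at h2 ⊢
    tauto
  · intro γ₁ γ₂ v₁ v₂ hγ₁ hγ₂ hv₁ hv₂ h₁ h₂
    obtain ⟨i, hi⟩ := Function.ne_iff.mp hv₁
    simp only [Pi.zero_apply] at hi
    have hE := congrFun (congrFun (h₁.symm.trans h₂) i) i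
    simp only [Matrix.smul_apply, vecMulVec_apply, smul_eq_mul] at hE
    have h2i : v₂ i ≠ 0 := by
      intro h0
      rw [h0] at hE
      simp only [mul_zero, neg_mul, neg_eq_zero, mul_eq_zero] at hE
      rcases hE with h | h
      exacts [hγ₁ h, hi (h.elim id id)]
    refine ⟨v₂ i / v₁ i, div_ne_zero h2i hi, ?_⟩
    field_simp
    first
      | linear_combination hE
      | linear_combination -hE
      | linear_combination (v₁ i) * hE
      | linear_combination -(v₁ i) * hE
end
end
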